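/- arXiv:1307.4502 — 4 statements merged into one kernel-verified Lean document; each statement's English description precedes it below -/
import Mathlib

section
/- Let A be an m×n real matrix, x ∈ ℝⁿ, K ⊆ {1,...,n} with complement K̄, and C > 1. Suppose for every w in the null space of A we have ‖x_K + w_K‖₁ + (1/C)‖w_{K̄}‖₁ ≥ ‖x_K‖₁. Then any minimizer x̂ of ‖z‖₁ subject to Az = Ax satisfies ‖x_K‖₁ − ‖x̂_K‖₁ ≤ (2/(C−1))‖x_{K̄}‖₁. -/
/-! With `w = x̂ - x` in the null space, the hypothesis gives
`C (‖x_K‖₁ - ‖x̂_K‖₁) ≤ ‖w_K̄‖₁`, while minimality of `x̂` and the triangle inequality give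
`‖w_K̄‖₁ ≤ ‖x̂_K̄‖₁ + ‖x_K̄‖₁ ≤ (‖x_K‖₁ - ‖x̂_K‖₁) + 2 ‖x_K̄‖₁`. -/

noncomputable def l1 {n : ℕ} (x : Fin n → ℝ) : ℝ := ∑ i, |x i|

def restr {n : ℕ} (x : Fin n → ℝ) (S : Finset (Fin n)) : Fin n → ℝ :=
  fun i => if i ∈ S then x i else 0

lemma l1_restr {n : ℕ} (x : Fin n → ℝ) (S : Finset (Fin n)) :
    l1 (restr x S) = ∑ i ∈ S, |x i| := by
  simp only [l1, restr, apply_ite, abs_zero, Finset.sum_ite_mem, Finset.univ_inter]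

lemma l1_restr_add_l1_restr_compl {n : ℕ} (x : Fin n → ℝ) (S : Finset (Fin n)) :
    l1 (restr x S) + l1 (restr x Sᶜ) = l1 x := by
  rw [l1_restr, l1_restr, Finset.sum_add_sum_compl, l1]

lemma l1_restr_sub_le {n : ℕ} (a b : Fin n → ℝ) (S : Finset (Fin n)) :
    l1 (restr (a - b) S) ≤ l1 (restr a S) + l1 (restr b S) := by
  rw [l1_restr, l1_restr, l1_restr, ← Finset.sum_add_distrib]
  exact Finset.sum_le_sum fun i _ => abs_sub _ _

lemma restr_add_restr_sub {n : ℕ} (x y : Fin n → ℝ) (S : Finset (Fin n)) :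
    restr x S + restr (y - x) S = restr y S := by
  ext i
  by_cases hi : i ∈ S <;> simp [restr, hi]

theorem stmt_0 {m n : ℕ} (A : Matrix (Fin m) (Fin n) ℝ) (x : Fin n → ℝ)
    (K : Finset (Fin n)) (C : ℝ) (hC : 1 < C)
    (hns : ∀ w : Fin n → ℝ, A.mulVec w = 0 →
      l1 (restr x K + restr w K) + (1 / C) * l1 (restr w Kᶜ) ≥ l1 (restr x K))
    (xhat : Fin n → ℝ) (hfeas : A.mulVec xhat = A.mulVec x)
    (hmin : ∀ z : Fin n → ℝ, A.mulVec z = A.mulVec x → l1 xhat ≤ l1 z) :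
    l1 (restr x K) - l1 (restr xhat K) ≤ (2 / (C - 1)) * l1 (restr x Kᶜ) := by
  have hnull : A.mulVec (xhat - x) = 0 := by rw [Matrix.mulVec_sub, hfeas, sub_self]
  have hrobust := hns (xhat - x) hnull
  rw [restr_add_restr_sub, one_div_mul_eq_div, ge_iff_le, ← sub_le_iff_le_add'] at hrobust
  have hgap := (le_div_iff₀' (zero_lt_one.trans hC)).1 hrobust
  have hopt := hmin x rfl
  rw [← l1_restr_add_l1_restr_compl x K, ← l1_restr_add_l1_restr_compl xhat K] at hopt
  have htri := l1_restr_sub_le xhat x Kᶜ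
  rw [div_mul_eq_mul_div, le_div_iff₀ (sub_pos.2 hC)]
  linarith
end

section
/- Let A be an m×n real matrix, x ∈ ℝⁿ, K ⊆ {1,...,n} with complement K̄, and C > 1. Suppose for every w in the null space of A we have ‖x_K + w_K‖₁ + (1/C)‖w_{K̄}‖₁ ≥ ‖x_K‖₁. Then any minimizer x̂ of ‖z‖₁ subject to Az = Ax satisfies ‖(x − x̂)_{K̄}‖₁ ≤ (2C/(C−1))‖x_{K̄}‖₁. -/
/-! Put `w = x̂ - x`, a null vector. Minimality gives `‖x + w‖₁ ≤ ‖x‖₁`; splitting both sides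
along `K` and applying the reverse triangle inequality on `K̄` yields
`‖x_K + w_K‖₁ + ‖w_K̄‖₁ ≤ ‖x_K‖₁ + 2‖x_K̄‖₁`. Against the null space property
`‖x_K + w_K‖₁ + ‖w_K̄‖₁ / C ≥ ‖x_K‖₁` this leaves `(1 - 1/C)‖w_K̄‖₁ ≤ 2‖x_K̄‖₁`. -/

section

variable {n : ℕ}

lemma l1_eq_l1_restr_add_l1_restr_compl (v : Fin n → ℝ) (S : Finset (Fin n)) :
    l1 v = l1 (restr v S) + l1 (restr v Sᶜ) := by
  simp only [l1, ← Finset.sum_add_distrib]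
  refine Finset.sum_congr rfl fun i _ => ?_
  by_cases h : i ∈ S <;> simp [restr, h]

lemma l1_neg (v : Fin n → ℝ) : l1 (-v) = l1 v := by
  simp [l1]

lemma l1_add_le (a b : Fin n → ℝ) : l1 (a + b) ≤ l1 a + l1 b := by
  simp only [l1, ← Finset.sum_add_distrib]
  exact Finset.sum_le_sum fun i _ => abs_add_le _ _

lemma l1_sub_l1_le_l1_add (a b : Fin n → ℝ) : l1 b - l1 a ≤ l1 (a + b) := by
  have := l1_add_le (a + b) (-a)
  rw [add_neg_cancel_comm, l1_neg] at this
  linarith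

lemma restr_add (a b : Fin n → ℝ) (S : Finset (Fin n)) :
    restr (a + b) S = restr a S + restr b S := by
  funext i; by_cases h : i ∈ S <;> simp [restr, h]

lemma restr_neg (v : Fin n → ℝ) (S : Finset (Fin n)) : restr (-v) S = -restr v S := by
  funext i; by_cases h : i ∈ S <;> simp [restr, h]

lemma l1_restr_sub_comm (a b : Fin n → ℝ) (S : Finset (Fin n)) :
    l1 (restr (a - b) S) = l1 (restr (b - a) S) := by
  rw [← neg_sub, restr_neg, l1_neg]

lemma l1_restr_add_add_l1_restr_compl_le {x w : Fin n → ℝ} (K : Finset (Fin n))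
    (h : l1 (x + w) ≤ l1 x) :
    l1 (restr x K + restr w K) + l1 (restr w Kᶜ) ≤ l1 (restr x K) + 2 * l1 (restr x Kᶜ) := by
  have hsplit_xw := l1_eq_l1_restr_add_l1_restr_compl (x + w) K
  have hsplit_x := l1_eq_l1_restr_add_l1_restr_compl x K
  have hcompl := l1_sub_l1_le_l1_add (restr x Kᶜ) (restr w Kᶜ)
  rw [restr_add, restr_add] at hsplit_xw
  linarith

end

theorem stmt_1 {m n : ℕ} (A : Matrix (Fin m) (Fin n) ℝ) (x : Fin n → ℝ)
    (K : Finset (Fin n)) (C : ℝ) (hC : 1 < C)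
    (hns : ∀ w : Fin n → ℝ, A.mulVec w = 0 →
      l1 (restr x K + restr w K) + (1 / C) * l1 (restr w Kᶜ) ≥ l1 (restr x K))
    (xhat : Fin n → ℝ) (hfeas : A.mulVec xhat = A.mulVec x)
    (hmin : ∀ z : Fin n → ℝ, A.mulVec z = A.mulVec x → l1 xhat ≤ l1 z) :
    l1 (restr (x - xhat) Kᶜ) ≤ (2 * C / (C - 1)) * l1 (restr x Kᶜ) := by
  set w := xhat - x
  have hnull : A.mulVec w = 0 := by rw [Matrix.mulVec_sub, hfeas, sub_self]
  have hdescent : l1 (x + w) ≤ l1 x := by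
    rw [add_sub_cancel]
    exact hmin x rfl
  have hcone := l1_restr_add_add_l1_restr_compl_le K hdescent
  have hnsp := hns w hnull
  have hCinv : C * (1 / C) = 1 := by field_simp
  rw [l1_restr_sub_comm, div_mul_eq_mul_div, le_div_iff₀ (by linarith)]
  linear_combination C * hnsp + C * hcone + l1 (restr w Kᶜ) * hCinv
end

section
/- Let A be an m×n real matrix, L ⊆ {1,...,n}, ω ≥ 1, and x ∈ ℝⁿ with support contained in L. If for every nonzero w in the null space of A we have ‖w_{L̄}‖₁ > ‖w_L‖₁ / ω, then x is the unique minimizer of ‖z_L‖₁ + ω‖z_{L̄}‖₁ subject to Az = Ax. -/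
/-! Put `w = z - x`, a nonzero vector of the null space. Since `x` vanishes off `L`, `z` and `w`
agree off `L`, so the triangle inequality `‖x_L‖₁ ≤ ‖z_L‖₁ + ‖w_L‖₁` and the null space property
`‖w_L‖₁ < ω ‖w_{L̄}‖₁` give `‖x_L‖₁ < ‖z_L‖₁ + ω ‖z_{L̄}‖₁`, while `‖x_{L̄}‖₁ = 0`. -/

section WeightedL1

variable {n : ℕ}

@[simp]
lemma l1_zero : l1 (0 : Fin n → ℝ) = 0 := by
  simp [l1]

lemma l1_sub_le (u v : Fin n → ℝ) : l1 (u - v) ≤ l1 u + l1 v := by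
  rw [l1, l1, l1, ← Finset.sum_add_distrib]
  exact Finset.sum_le_sum fun i _ => abs_sub (u i) (v i)

lemma restr_sub (u v : Fin n → ℝ) (S : Finset (Fin n)) :
    restr (u - v) S = restr u S - restr v S := by
  funext i
  by_cases hi : i ∈ S <;> simp [restr, hi]

lemma restr_compl_eq_zero {x : Fin n → ℝ} {L : Finset (Fin n)}
    (hsupp : ∀ i, x i ≠ 0 → i ∈ L) : restr x Lᶜ = 0 := by
  funext i
  by_cases hi : i ∈ L
  · simp [restr, hi]
  · simpa [restr, hi] using mt (hsupp i) hi

lemma weighted_l1_lt_of_supp_of_lt {x z : Fin n → ℝ} {L : Finset (Fin n)} {ω : ℝ}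
    (hsupp : ∀ i, x i ≠ 0 → i ∈ L)
    (hlt : l1 (restr (z - x) L) < ω * l1 (restr (z - x) Lᶜ)) :
    l1 (restr x L) + ω * l1 (restr x Lᶜ) < l1 (restr z L) + ω * l1 (restr z Lᶜ) := by
  have hx : restr x Lᶜ = 0 := restr_compl_eq_zero hsupp
  have hzw : restr (z - x) Lᶜ = restr z Lᶜ := by rw [restr_sub, hx, sub_zero]
  have htri : l1 (restr x L) ≤ l1 (restr z L) + l1 (restr (z - x) L) := by
    have : restr x L = restr z L - restr (z - x) L := by rw [restr_sub, sub_sub_cancel]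
    exact this ▸ l1_sub_le _ _
  rw [hx, l1_zero, mul_zero, add_zero]
  rw [hzw] at hlt
  linarith

end WeightedL1

theorem stmt_5 {m n : ℕ} (A : Matrix (Fin m) (Fin n) ℝ) (L : Finset (Fin n))
    (ω : ℝ) (hω : 1 ≤ ω) (x : Fin n → ℝ) (hsupp : ∀ i, x i ≠ 0 → i ∈ L)
    (hns : ∀ w : Fin n → ℝ, A.mulVec w = 0 → w ≠ 0 →
      l1 (restr w Lᶜ) > l1 (restr w L) / ω) :
    ∀ z : Fin n → ℝ, A.mulVec z = A.mulVec x → z ≠ x →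
      l1 (restr x L) + ω * l1 (restr x Lᶜ) < l1 (restr z L) + ω * l1 (restr z Lᶜ) := by
  intro z hAz hzx
  have hnull : A.mulVec (z - x) = 0 := by rw [Matrix.mulVec_sub, hAz, sub_self]
  have hnsp := hns (z - x) hnull (sub_ne_zero.mpr hzx)
  rw [gt_iff_lt, div_lt_iff₀ (by linarith)] at hnsp
  exact weighted_l1_lt_of_supp_of_lt hsupp (by linarith)
end

section
/- Let x, x̂ ∈ ℝⁿ, let K = supp(x) with |K| = k, and let L be a set of k indices of the k largest-magnitude entries of x̂. If every nonzero entry of x has magnitude at least d > 0 and ‖x − x̂‖₁ ≤ ε, then the number of indices in K missing from L is at most 2ε/d, i.e., |K \ L| ≤ 2ε/d. -/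
theorem stmt_8 {n : ℕ} (x xhat : Fin n → ℝ) (k : ℕ)
    (K : Finset (Fin n)) (hK : K = Finset.univ.filter (fun i => x i ≠ 0))
    (hk : K.card = k)
    (L : Finset (Fin n)) (hL : L.card = k)
    (hLtop : ∀ i ∈ L, ∀ j ∉ L, |xhat j| ≤ |xhat i|)
    (d : ℝ) (hd : 0 < d) (hmag : ∀ i ∈ K, d ≤ |x i|)
    (ε : ℝ) (herr : l1 (x - xhat) ≤ ε) :
    ((K \ L).card : ℝ) ≤ 2 * ε / d := by
  have hcard : (K \ L).card = (L \ K).card := by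
    have h1 := Finset.card_sdiff_add_card_inter K L
    have h2 := Finset.card_sdiff_add_card_inter L K
    rw [Finset.inter_comm] at h2
    omega
  let e := Finset.equivOfCardEq hcard
  -- key pointwise inequality
  have key : ∀ i : (K \ L : Finset (Fin n)),
      d ≤ |x i.1 - xhat i.1| + |x (e i).1 - xhat (e i).1| := by
    intro i
    have hiK : (i : Fin n) ∈ K := (Finset.mem_sdiff.mp i.2).1
    have hiL : (i : Fin n) ∉ L := (Finset.mem_sdiff.mp i.2).2
    have hjL : ((e i : Fin n)) ∈ L := (Finset.mem_sdiff.mp (e i).2).1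
    have hjK : ((e i : Fin n)) ∉ K := (Finset.mem_sdiff.mp (e i).2).2
    have hxj : x (e i).1 = 0 := by
      by_contra h
      have hm := Finset.ext_iff.mp hK (e i).1
      simp only [Finset.mem_filter, Finset.mem_univ, true_and] at hm
      exact hjK (hm.mpr h)
    have h1 : d ≤ |x i.1| := hmag _ hiK
    have h2 : |xhat i.1| ≤ |xhat (e i).1| := hLtop _ hjL _ hiL
    have h3 : |x i.1| ≤ |x i.1 - xhat i.1| + |xhat i.1| := by
      have := abs_sub_abs_le_abs_sub (x i.1) (xhat i.1)
      linarith [abs_nonneg (x i.1 - xhat i.1), abs_abs (xhat i.1)]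
    have h4 : |x (e i).1 - xhat (e i).1| = |xhat (e i).1| := by
      rw [hxj, zero_sub, abs_neg]
    linarith
  have hsum : d * ((K \ L).card : ℝ)
      ≤ ∑ i ∈ (K \ L), |x i - xhat i| + ∑ j ∈ (L \ K), |x j - xhat j| := by
    have := Finset.sum_le_sum (s := (Finset.univ : Finset ((K \ L : Finset (Fin n)) : Type)))
      (f := fun _ => d)
      (g := fun i => |x i.1 - xhat i.1| + |x (e i).1 - xhat (e i).1|)
      (fun i _ => key i)
    simp only [Finset.sum_const, Finset.card_univ, Fintype.card_coe, nsmul_eq_mul,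
      Finset.sum_add_distrib] at this
    have hA : ∑ i : (K \ L : Finset (Fin n)), |x i.1 - xhat i.1|
        = ∑ i ∈ (K \ L), |x i - xhat i| := by
      exact Finset.sum_coe_sort (K \ L) (fun i => |x i - xhat i|)
    have hB : ∑ i : (K \ L : Finset (Fin n)), |x (e i).1 - xhat (e i).1|
        = ∑ j ∈ (L \ K), |x j - xhat j| := by
      exact (Equiv.sum_comp e (fun j : (L \ K : Finset (Fin n)) => |x j.1 - xhat j.1|)).trans
        (Finset.sum_coe_sort (L \ K) (fun j => |x j - xhat j|))
    rw [hA, hB] at this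
    linarith
  have hsub : ∑ i ∈ (K \ L), |x i - xhat i| + ∑ j ∈ (L \ K), |x j - xhat j|
      ≤ l1 (x - xhat) := by
    rw [← Finset.sum_union (Finset.sdiff_disjoint.mono_right Finset.sdiff_subset)]
    unfold l1
    apply Finset.sum_le_sum_of_subset_of_nonneg (Finset.subset_univ _)
    intro i _ _
    exact abs_nonneg _
  have hε : 0 ≤ ε := le_trans (Finset.sum_nonneg fun i _ => abs_nonneg _) herr
  have : d * ((K \ L).card : ℝ) ≤ ε := by
    calc d * _ ≤ _ := hsum
    _ ≤ l1 (x - xhat) := hsub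
    _ ≤ ε := herr
  rw [div_eq_mul_inv, ← div_eq_mul_inv]
  rw [le_div_iff₀ hd]
  nlinarith
end
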